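/- arXiv:2309.10111 — 5 statements merged into one kernel-verified Lean document; each statement's English description precedes it below -/
import Mathlib

section
/- The inverse of the Meyerson map φ_α satisfies the Lusin (N) condition: it maps Lebesgue measure-zero subsets of ℂ to Lebesgue measure-zero subsets of ℝ². -/
/-!
Off the line `{u = 0}` the inverse `(u, v) ↦ (h u, v)` of `φ_α` is differentiable, so it maps
null sets to null sets; the line itself is null and is mapped onto itself. As `φ_α` has this
left inverse, `φ_α ⁻¹' s` is contained in the image of `s` under it.
-/

open MeasureTheory Set Filter Topology

theorem addHaar_image_eq_zero_of_differentiableOn_compl {E : Type*} [NormedAddCommGroup E]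
    [NormedSpace ℝ E] [FiniteDimensional ℝ E] [MeasurableSpace E] [BorelSpace E]
    (μ : Measure E) [μ.IsAddHaarMeasure] {f : E → E} {s Z : Set E}
    (hf : DifferentiableOn ℝ f Zᶜ) (hZ : μ (f '' Z) = 0) (hs : μ s = 0) : μ (f '' s) = 0 := by
  have hdiff : μ (f '' (s \ Z)) = 0 :=
    addHaar_image_eq_zero_of_differentiableOn_of_addHaar_eq_zero μ
      (hf.mono fun _ hx => hx.2) (measure_mono_null sdiff_subset hs)
  refine measure_mono_null (fun y ⟨x, hx, hxy⟩ => ?_) (measure_union_null hdiff hZ)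
  by_cases hxZ : x ∈ Z
  exacts [Or.inr ⟨x, hxZ, hxy⟩, Or.inl ⟨x, ⟨hx, hxZ⟩, hxy⟩]

theorem volume_image_prodMap_id_eq_zero {h : ℝ → ℝ} {a : ℝ}
    (hd : ∀ u ≠ a, DifferentiableAt ℝ h u) {t : Set (ℝ × ℝ)} (ht : volume t = 0) :
    volume (Prod.map h id '' t) = 0 := by
  refine addHaar_image_eq_zero_of_differentiableOn_compl volume (Z := {a} ×ˢ univ)
    (fun p hp => ?_) ?_ ht
  · have hpa : p.1 ≠ a := fun hp1 => hp ⟨hp1, trivial⟩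
    exact (DifferentiableAt.prodMap p (hd p.1 hpa) differentiableAt_id).differentiableWithinAt
  · rw [prodMap_image_prod, image_singleton, image_id, Measure.volume_eq_prod,
      Measure.prod_prod, Real.volume_singleton, zero_mul]

theorem Real.sign_eventuallyEq_of_ne_zero {u : ℝ} (hu : u ≠ 0) :
    Real.sign =ᶠ[𝓝 u] fun _ => Real.sign u := by
  rcases hu.lt_or_gt with hu | hu
  · filter_upwards [gt_mem_nhds hu] with v hv
    rw [Real.sign_of_neg hv, Real.sign_of_neg hu]
  · filter_upwards [lt_mem_nhds hu] with v hv
    rw [Real.sign_of_pos hv, Real.sign_of_pos hu]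

noncomputable def meyersonInv (α u : ℝ) : ℝ :=
  Real.sign u * ((α + 1) * |u|) ^ (α + 1)⁻¹

theorem differentiableAt_meyersonInv {α u : ℝ} (hα : α + 1 ≠ 0) (hu : u ≠ 0) :
    DifferentiableAt ℝ (meyersonInv α) u := by
  have hbase : (α + 1) * |u| ≠ 0 := mul_ne_zero hα (abs_ne_zero.2 hu)
  refine DifferentiableAt.congr_of_eventuallyEq ?_
    ((Real.sign_eventuallyEq_of_ne_zero hu).mul
      (EventuallyEq.refl _ fun v => ((α + 1) * |v|) ^ (α + 1)⁻¹))
  exact ((differentiableAt_abs hu).const_mul _ |>.rpow_const (.inl hbase)).const_mul _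

theorem leftInverse_meyersonInv {α : ℝ} (hα : 0 < α + 1) :
    Function.LeftInverse (meyersonInv α) fun x => x * |x| ^ α / (α + 1) := by
  intro x
  have hroot : ((α + 1) * |x * |x| ^ α / (α + 1)|) ^ (α + 1)⁻¹ = |x| := by
    rw [abs_div, abs_mul, abs_of_nonneg (Real.rpow_nonneg (abs_nonneg x) α), abs_of_pos hα,
      mul_div_cancel₀ _ hα.ne', ← Real.rpow_one_add' (abs_nonneg x) (by linarith), add_comm,
      Real.rpow_rpow_inv (abs_nonneg x) hα.ne']
  change Real.sign (x * |x| ^ α / (α + 1)) * _ = x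
  rw [hroot]
  obtain rfl | hx := eq_or_ne x 0
  · simp
  have hfactor : 0 < |x| ^ α / (α + 1) := div_pos (Real.rpow_pos_of_pos (abs_pos.2 hx) α) hα
  rw [mul_div_assoc]
  rcases hx.lt_or_gt with hx | hx
  · rw [Real.sign_of_neg (mul_neg_of_neg_of_pos hx hfactor), abs_of_neg hx]
    ring
  · rw [Real.sign_of_pos (mul_pos hx hfactor), abs_of_pos hx, one_mul]

theorem meyerson_inv_lusinN_general (α : ℝ) (hα : 0 < α) :
    ∀ s : Set ℂ, volume s = 0 →
      volume ((fun p : ℝ × ℝ => (↑(p.1 * |p.1| ^ α / (α + 1)) : ℂ) + p.2 * Complex.I) ⁻¹' s) = 0 := by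
  intro s hs
  have hα1 : 0 < α + 1 := by linarith
  have ht : volume (Complex.measurableEquivRealProd.symm ⁻¹' s) = 0 :=
    Complex.volume_preserving_equiv_real_prod.symm.quasiMeasurePreserving.preimage_null hs
  have hφ : (fun p : ℝ × ℝ => (↑(p.1 * |p.1| ^ α / (α + 1)) : ℂ) + p.2 * Complex.I) =
      Complex.measurableEquivRealProd.symm ∘ Prod.map (fun x => x * |x| ^ α / (α + 1)) id := by
    funext p
    exact (Complex.mk_eq_add_mul_I _ _).symm
  rw [hφ, preimage_comp]
  refine measure_mono_null (preimage_subset_image_of_inverse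
    ((leftInverse_meyersonInv hα1).prodMap (g₁ := id) (g₂ := id) fun _ => rfl) _) ?_
  exact volume_image_prodMap_id_eq_zero (fun u hu => differentiableAt_meyersonInv hα1.ne' hu) ht

/-- The inverse of the Meyerson map `φ_α` satisfies the Lusin (N) condition: preimages
under the (bijective) Meyerson map of Lebesgue measure-zero subsets of `ℂ` have
Lebesgue measure zero in `ℝ²`. -/
theorem meyerson_inv_lusinN (α : ℝ) (hα : 0 < α)
    (hbij : Function.Bijective
      (fun p : ℝ × ℝ => (↑(p.1 * |p.1| ^ α / (α + 1)) : ℂ) + p.2 * Complex.I)) :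
    ∀ s : Set ℂ, volume s = 0 →
      volume ((fun p : ℝ × ℝ => (↑(p.1 * |p.1| ^ α / (α + 1)) : ℂ) + p.2 * Complex.I) ⁻¹' s) = 0 :=
  meyerson_inv_lusinN_general α hα
end

section
/- Let u = u₁ + iu₂ be a holomorphic function on an open set Ω ⊆ ℂ with u'(z) ≠ 0 for all z ∈ Ω, and suppose u₁(0,y) = 0 for all points iy ∈ Ω on the imaginary axis. Then for every point iy₀ ∈ Ω, the limit of u₁(x,y)/x as (x,y) → (0,y₀) (through points with x ≠ 0) exists and equals ∂u₁/∂x(0,y₀), which is nonzero. -/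
open Filter Topology Asymptotics Complex

/-! Let `c = u'(z₀)`. Since `Re u` vanishes along the imaginary axis near `z₀`, differentiating
in the direction `i` gives `Re (i c) = -Im c = 0`, so `c` is real and, being nonzero, `Re c ≠ 0`.
For the limit, compare `z` with its projection `i Im z` on the axis: strict differentiability
of `u` at `z₀` gives `u z - u (i Im z) = c Re z + o(Re z)`, and `Re u (i Im z) = 0`. -/

lemma im_eq_zero_of_hasDerivAt_of_re_eq_zero {u : ℂ → ℂ} {u' z₀ : ℂ} (h : HasDerivAt u u' z₀)
    (hz₀ : z₀.re = 0) (hvanish : ∀ᶠ z in 𝓝 z₀, z.re = 0 → (u z).re = 0) : u'.im = 0 := by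
  have hline : HasDerivAt (fun w : ℂ => z₀ + w * I) I 0 := by
    simpa using ((hasDerivAt_id (0 : ℂ)).mul_const I).const_add z₀
  have hderiv : HasDerivAt (fun t : ℝ => (u (z₀ + t * I)).re) (u' * I).re 0 := by
    refine HasDerivAt.real_of_complex (e := fun w => u (z₀ + w * I)) ?_
    exact (h.comp_of_eq (0 : ℂ) hline (by simp)).congr_deriv (by ring)
  have hzero : (fun t : ℝ => (u (z₀ + t * I)).re) =ᶠ[𝓝 0] fun _ => 0 := by
    have : Tendsto (fun t : ℝ => z₀ + t * I) (𝓝 0) (𝓝 z₀) := by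
      simpa [Function.comp_def] using hline.continuousAt.tendsto.comp (continuous_ofReal.tendsto 0)
    exact (this.eventually hvanish).mono fun t ht => ht (by simp [hz₀])
  simpa using (hderiv.congr_of_eventuallyEq hzero.symm).unique (hasDerivAt_const 0 (0 : ℝ))

lemma fderiv_re_apply_one_of_hasDerivAt {u : ℂ → ℂ} {u' z₀ : ℂ} (h : HasDerivAt u u' z₀) :
    fderiv ℝ (fun z => (u z).re) z₀ 1 = u'.re := by
  have := reCLM.hasFDerivAt.comp z₀ (h.hasFDerivAt.restrictScalars ℝ)
  rw [HasFDerivAt.fderiv (f := fun z => (u z).re) this]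
  simp

lemma tendsto_re_div_re_of_hasStrictDerivAt {u : ℂ → ℂ} {u' z₀ : ℂ} (h : HasStrictDerivAt u u' z₀)
    (hz₀ : z₀.re = 0) (hvanish : ∀ᶠ z in 𝓝 z₀, z.re = 0 → (u z).re = 0) :
    Tendsto (fun z => (u z).re / z.re) (𝓝[{z | z.re ≠ 0}] z₀) (𝓝 u'.re) := by
  have hproj : Tendsto (fun z : ℂ => (z.im : ℂ) * I) (𝓝 z₀) (𝓝 z₀) := by
    have : (z₀.im : ℂ) * I = z₀ := by apply Complex.ext <;> simp [hz₀]
    exact (by fun_prop : Continuous fun z : ℂ => (z.im : ℂ) * I).tendsto' _ _ this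
  have hlittle : (fun z => u z - u (z.im * I) - z.re * u') =o[𝓝 z₀] fun z => (z.re : ℂ) := by
    have hsub (z : ℂ) : z - z.im * I = z.re := sub_eq_of_eq_add (re_add_im z).symm
    simpa [Function.comp_def, hsub] using
      h.isLittleO.comp_tendsto (tendsto_id.prodMk_nhds hproj)
  have hre : (fun z => (u z).re - z.re * u'.re) =o[𝓝 z₀] fun z => z.re := by
    have hre_le : (fun z => (u z - u (z.im * I) - z.re * u').re) =O[𝓝 z₀]
        fun z => u z - u (z.im * I) - z.re * u' :=
      isBigO_of_le _ fun z => by simpa only [Real.norm_eq_abs] using abs_re_le_norm _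
    have hnorm : (fun z => (z.re : ℂ)) =O[𝓝 z₀] fun z => z.re := isBigO_of_le _ fun z => by simp
    refine (hre_le.trans_isLittleO (hlittle.trans_isBigO hnorm)).congr' ?_ .rfl
    filter_upwards [hproj.eventually hvanish] with z hz
    simp [hz (by simp)]
  refine tendsto_sub_nhds_zero_iff.mp
    ((hre.mono nhdsWithin_le_nhds).tendsto_div_nhds_zero.congr' ?_)
  filter_upwards [self_mem_nhdsWithin] with z hz
  field_simp

/-- If `u` is holomorphic on an open set `Ω` with nowhere-vanishing derivative and
`Re u` vanishes on `Ω ∩ {Re z = 0}`, then at every point `z₀ = iy₀ ∈ Ω`,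
`Re u(z)/Re z → ∂(Re u)/∂x (z₀)` as `z → z₀` through points with `Re z ≠ 0`,
and this partial derivative is nonzero. -/
theorem meyerson_boundary_limit (Ω : Set ℂ) (hΩ : IsOpen Ω) (u : ℂ → ℂ)
    (hu : DifferentiableOn ℂ u Ω) (hu' : ∀ z ∈ Ω, deriv u z ≠ 0)
    (hvanish : ∀ z ∈ Ω, z.re = 0 → (u z).re = 0) :
    ∀ z₀ ∈ Ω, z₀.re = 0 →
      fderiv ℝ (fun z => (u z).re) z₀ 1 ≠ 0 ∧
      Tendsto (fun z : ℂ => (u z).re / z.re)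
        (𝓝[{z : ℂ | z.re ≠ 0}] z₀)
        (𝓝 (fderiv ℝ (fun z => (u z).re) z₀ 1)) := by
  intro z₀ hz₀ hre
  have hΩz₀ : Ω ∈ 𝓝 z₀ := hΩ.mem_nhds hz₀
  have hstrict : HasStrictDerivAt u (deriv u z₀) z₀ := (hu.analyticAt hΩz₀).hasStrictDerivAt
  have hvanish₀ : ∀ᶠ z in 𝓝 z₀, z.re = 0 → (u z).re = 0 := eventually_of_mem hΩz₀ hvanish
  have him : (deriv u z₀).im = 0 :=
    im_eq_zero_of_hasDerivAt_of_re_eq_zero hstrict.hasDerivAt hre hvanish₀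
  rw [fderiv_re_apply_one_of_hasDerivAt hstrict.hasDerivAt]
  exact ⟨fun hre' => hu' z₀ hz₀ (Complex.ext hre' him),
    tendsto_re_div_re_of_hasStrictDerivAt hstrict hre hvanish₀⟩
end

section
/- Suppose g = (g₁,g₂) is differentiable at a point p with x ≠ 0 and g₁(p) ≠ 0, and suppose |g₁|^α X g₁ = Y_α g₂ and |g₁|^α Y_α g₁ = −X g₂ at p (the Grushin Cauchy–Riemann system), with D_α g(p) nonsingular. Then W̄g(p) = 0 and Wg(p) ≠ 0. Conversely, if W̄g(p) = 0 and Wg(p) ≠ 0 then the Grushin Cauchy–Riemann system holds at p and D_α g(p) is nonsingular. -/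
/-!
Only the values of the partial derivatives at `p` enter, so the statement is linear algebra.
Writing `A = |g₁(p)|^α`, `B = |x|^α` and `|x g₁(p)|^α = A B`, the equation `W̄g(p) = 0` is exactly
the Grushin Cauchy–Riemann system. Under that system `det D_α g(p) = (Xg₁)² + (Y_α g₁)²` and
`Wg(p) = 2A (Xg₁ − i Y_α g₁)`, so both nondegeneracy conditions say that `(Xg₁, Y_α g₁) ≠ 0`.
-/

lemma Complex.ofReal_add_ofReal_mul_I_eq_zero_iff (u v : ℝ) :
    (u : ℂ) + v * Complex.I = 0 ↔ u = 0 ∧ v = 0 := by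
  simp [Complex.ext_iff]

lemma Complex.ofReal_add_ofReal_mul_I_ne_zero_iff (u v : ℝ) :
    (u : ℂ) + v * Complex.I ≠ 0 ↔ u ≠ 0 ∨ v ≠ 0 := by
  rw [Ne, Complex.ofReal_add_ofReal_mul_I_eq_zero_iff, not_and_or]

section GrushinAlgebra

variable {A B a b c d : ℝ}

lemma det_grushin_of_cauchyRiemann (hA : A ≠ 0) (hd : B * d = A * a) (hc : c = -(A * (B * b))) :
    Matrix.det !![a, B * b; c / A, B * d / A] = a ^ 2 + (B * b) ^ 2 := by
  rw [Matrix.det_fin_two_of, hd, hc]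
  field_simp
  ring

lemma sq_add_mul_sq_ne_zero_iff (hB : B ≠ 0) : a ^ 2 + (B * b) ^ 2 ≠ 0 ↔ a ≠ 0 ∨ b ≠ 0 := by
  rw [Ne, add_eq_zero_iff_of_nonneg (sq_nonneg _) (sq_nonneg _), not_and_or]
  simp [hB]

/-- `A`, `B` stand for `|g₁(p)|^α`, `|x|^α` and `a, b, c, d` for `Xg₁, ∂_y g₁, Xg₂, ∂_y g₂` at `p`. -/
lemma cauchyRiemann_and_det_ne_zero_iff (hA : A ≠ 0) (hB : B ≠ 0) :
    (A * a = B * d ∧ A * (B * b) = -c ∧ Matrix.det !![a, B * b; c / A, B * d / A] ≠ 0) ↔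
      ((A * a - B * d = 0 ∧ c + A * B * b = 0) ∧ (A * a + B * d ≠ 0 ∨ c - A * B * b ≠ 0)) := by
  constructor
  · rintro ⟨hd, hc, hdet⟩
    rw [det_grushin_of_cauchyRiemann hA hd.symm (by linarith), sq_add_mul_sq_ne_zero_iff hB] at hdet
    refine ⟨⟨by linarith, by linarith⟩, ?_⟩
    rw [← hd, show c - A * B * b = -2 * (A * B) * b by linarith]
    rcases hdet with ha | hb
    · exact Or.inl (by simpa [two_mul, hA] using ha)
    · exact Or.inr (by simp [hA, hB, hb])
  · rintro ⟨⟨hd, hc⟩, hW⟩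
    have hd : B * d = A * a := by linarith
    have hc : c = -(A * (B * b)) := by linarith
    refine ⟨hd.symm, by linarith, ?_⟩
    rw [det_grushin_of_cauchyRiemann hA hd hc, sq_add_mul_sq_ne_zero_iff hB]
    rw [hd, hc] at hW
    rcases hW with ha | hb
    · exact Or.inl fun h => ha (by simp [h])
    · exact Or.inr fun h => hb (by simp [h])

end GrushinAlgebra

theorem grushin_CR_iff_wirtinger_general (α : ℝ) (g : ℝ × ℝ → ℝ × ℝ) (p : ℝ × ℝ)
    (hx : p.1 ≠ 0) (hg1 : (g p).1 ≠ 0)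
    (g1x g1y g2x g2y : ℝ) :
    (|(g p).1| ^ α * g1x = |p.1| ^ α * g2y ∧
     |(g p).1| ^ α * (|p.1| ^ α * g1y) = -g2x ∧
     Matrix.det !![g1x, |p.1| ^ α * g1y;
                   g2x / |(g p).1| ^ α, |p.1| ^ α * g2y / |(g p).1| ^ α] ≠ 0) ↔
    (Complex.ofReal (|(g p).1| ^ α * g1x - |p.1| ^ α * g2y) +
        Complex.ofReal (g2x + |p.1 * (g p).1| ^ α * g1y) * Complex.I = 0 ∧
     Complex.ofReal (|(g p).1| ^ α * g1x + |p.1| ^ α * g2y) +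
        Complex.ofReal (g2x - |p.1 * (g p).1| ^ α * g1y) * Complex.I ≠ 0) := by
  have hA : |(g p).1| ^ α ≠ 0 := (Real.rpow_pos_of_pos (abs_pos.2 hg1) α).ne'
  have hB : |p.1| ^ α ≠ 0 := (Real.rpow_pos_of_pos (abs_pos.2 hx) α).ne'
  have hAB : |p.1 * (g p).1| ^ α = |(g p).1| ^ α * |p.1| ^ α := by
    rw [abs_mul, Real.mul_rpow (abs_nonneg _) (abs_nonneg _), mul_comm]
  rw [hAB, Complex.ofReal_add_ofReal_mul_I_eq_zero_iff, Complex.ofReal_add_ofReal_mul_I_ne_zero_iff]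
  exact cauchyRiemann_and_det_ne_zero_iff hA hB

/-- The Grushin Cauchy–Riemann system `|g₁|^α Xg₁ = Y_α g₂`, `|g₁|^α Y_α g₁ = −Xg₂`
together with nonsingularity of `D_α g` at a point `p` (with `p.1 ≠ 0`, `g₁(p) ≠ 0`)
is equivalent to `W̄g(p) = 0` and `Wg(p) ≠ 0`. -/
theorem grushin_CR_iff_wirtinger (α : ℝ) (hα : 0 < α) (g : ℝ × ℝ → ℝ × ℝ) (p : ℝ × ℝ)
    (hdiff : DifferentiableAt ℝ g p) (hx : p.1 ≠ 0) (hg1 : (g p).1 ≠ 0)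
    (g1x g1y g2x g2y : ℝ)
    (h1x : g1x = fderiv ℝ (fun q => (g q).1) p (1, 0))
    (h1y : g1y = fderiv ℝ (fun q => (g q).1) p (0, 1))
    (h2x : g2x = fderiv ℝ (fun q => (g q).2) p (1, 0))
    (h2y : g2y = fderiv ℝ (fun q => (g q).2) p (0, 1)) :
    (|(g p).1| ^ α * g1x = |p.1| ^ α * g2y ∧
     |(g p).1| ^ α * (|p.1| ^ α * g1y) = -g2x ∧
     Matrix.det !![g1x, |p.1| ^ α * g1y;
                   g2x / |(g p).1| ^ α, |p.1| ^ α * g2y / |(g p).1| ^ α] ≠ 0) ↔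
    (Complex.ofReal (|(g p).1| ^ α * g1x - |p.1| ^ α * g2y) +
        Complex.ofReal (g2x + |p.1 * (g p).1| ^ α * g1y) * Complex.I = 0 ∧
     Complex.ofReal (|(g p).1| ^ α * g1x + |p.1| ^ α * g2y) +
        Complex.ofReal (g2x - |p.1 * (g p).1| ^ α * g1y) * Complex.I ≠ 0) :=
  grushin_CR_iff_wirtinger_general α g p hx hg1 g1x g1y g2x g2y
end

section
/- For α > 0, a ∈ ℝ \ {0}, b ∈ ℝ, the map g : ℝ² → ℝ², g(x,y) = (sign(a)·|a|^{1/(α+1)}·x, a·y + b), satisfies φ_α ∘ g = g̃ ∘ φ_α where g̃(z) = a·z + i·b and φ_α(x,y) = x|x|^α/(α+1) + iy. -/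
/-! Since `x ↦ x|x|^α` is multiplicative, scaling `x` by `c = sign(a)|a|^{1/(α+1)}` multiplies
the first coordinate of `φ_α` by `c|c|^α = sign(a)|a| = a`; the second coordinate is affine
in `y`. -/

namespace Real

theorem mul_mul_abs_rpow (c x α : ℝ) :
    c * x * |c * x| ^ α = c * |c| ^ α * (x * |x| ^ α) := by
  rw [abs_mul, mul_rpow (abs_nonneg c) (abs_nonneg x)]
  ring

theorem sign_mul_abs_sign_rpow (a α : ℝ) : sign a * |sign a| ^ α = sign a := by
  rcases sign_apply_eq a with h | h | h <;> simp [h]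

theorem sign_mul_abs_self (r : ℝ) : sign r * |r| = r := by
  rcases lt_trichotomy r 0 with hr | rfl | hr
  · rw [sign_of_neg hr, abs_of_neg hr, neg_one_mul, neg_neg]
  · rw [abs_zero, mul_zero]
  · rw [sign_of_pos hr, abs_of_pos hr, one_mul]

theorem sign_mul_abs_rpow_one_div_mul_abs_rpow {α : ℝ} (hα : α + 1 ≠ 0) (a : ℝ) :
    sign a * |a| ^ (1 / (α + 1)) * |sign a * |a| ^ (1 / (α + 1))| ^ α = a := by
  have ht : 0 ≤ |a| ^ (1 / (α + 1)) := rpow_nonneg (abs_nonneg a) _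
  have ht_pow : |a| ^ (1 / (α + 1)) * (|a| ^ (1 / (α + 1))) ^ α = |a| := by
    rw [mul_comm, ← rpow_add_one' ht hα, one_div, rpow_inv_rpow (abs_nonneg a) hα]
  rw [mul_mul_abs_rpow, sign_mul_abs_sign_rpow, abs_of_nonneg ht, ht_pow, sign_mul_abs_self]

end Real

theorem entire_grushin_conformal_form_general (α : ℝ) (hα : 0 < α) (a b : ℝ) :
    ∀ p : ℝ × ℝ,
      (fun q : ℝ × ℝ => Complex.ofReal (q.1 * |q.1| ^ α / (α + 1)) +
          Complex.ofReal q.2 * Complex.I)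
        (Real.sign a * |a| ^ (1 / (α + 1)) * p.1, a * p.2 + b) =
      (a : ℂ) *
        ((fun q : ℝ × ℝ => Complex.ofReal (q.1 * |q.1| ^ α / (α + 1)) +
          Complex.ofReal q.2 * Complex.I) p) + Complex.I * (b : ℂ) := by
  rintro ⟨x, y⟩
  have hscale : Real.sign a * |a| ^ (1 / (α + 1)) * x *
      |Real.sign a * |a| ^ (1 / (α + 1)) * x| ^ α = a * (x * |x| ^ α) := by
    rw [Real.mul_mul_abs_rpow,
      Real.sign_mul_abs_rpow_one_div_mul_abs_rpow (by linarith) a]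
  simp only [hscale]
  push_cast
  ring

/-- For `a ≠ 0`, `b ∈ ℝ`, the map `g(x,y) = (sign(a)|a|^{1/(α+1)}x, ay + b)` is
conjugated by the Meyerson map `φ_α` to the affine map `z ↦ az + ib`:
`φ_α ∘ g = g̃ ∘ φ_α`. -/
theorem entire_grushin_conformal_form (α : ℝ) (hα : 0 < α) (a b : ℝ) (ha : a ≠ 0) :
    ∀ p : ℝ × ℝ,
      (fun q : ℝ × ℝ => Complex.ofReal (q.1 * |q.1| ^ α / (α + 1)) +
          Complex.ofReal q.2 * Complex.I)
        (Real.sign a * |a| ^ (1 / (α + 1)) * p.1, a * p.2 + b) =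
      (a : ℂ) *
        ((fun q : ℝ × ℝ => Complex.ofReal (q.1 * |q.1| ^ α / (α + 1)) +
          Complex.ofReal q.2 * Complex.I) p) + Complex.I * (b : ℂ) :=
  entire_grushin_conformal_form_general α hα a b
end

section
/- Let γ : [a,b] → ℝ² be absolutely continuous with γ₁(t) ≠ 0 for a.e. t, and let g = (g₁,g₂) be C¹ near the image of γ with x ≠ 0 and g₁ ≠ 0 there, satisfying the Grushin Cauchy–Riemann equations ∂ₓg₂ = −|xg₁|^α ∂_y g₁ and |x|^α ∂_y g₂ = |g₁|^α ∂ₓ g₁. Then for a.e. t, the Grushin length element transforms by: √((d/dt g₁(γ))² + |g₁(γ)|^{-2α}(d/dt g₂(γ))²) = |∇_H g₁(γ(t))| · √((γ₁')² + |γ₁|^{-2α}(γ₂')²), where ∇_H g₁ = (∂ₓg₁, |x|^α ∂_y g₁). -/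
/-!
The differential of a Grushin-conformal map at `p` has rows `(A, B)` and `(-|x y|^α B, |y|^α A / |x|^α)`,
where `x = p.1` and `y = g₁(p)`. After rescaling the second row by `|y|^{-α}` and the second column
by `|x|^α`, it becomes `[[A, |x|^α B], [-|x|^α B, A]]`, which is `√(A² + |x|^{2α} B²)` times a rotation;
so the Grushin length element is multiplied by exactly `|∇_H g₁|`.
-/

open Real

/-- `x` is the first coordinate of the base point, the only part of it the Grushin metric sees. -/
noncomputable def grushinLengthElement (α x : ℝ) (v : ℝ × ℝ) : ℝ :=
  √(v.1 ^ 2 + |x| ^ (-(2 * α)) * v.2 ^ 2)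

lemma map_eq_fst_smul_add_snd_smul {R M F : Type*} [Semiring R] [AddCommMonoid M] [Module R M]
    [FunLike F (R × R) M] [LinearMapClass F R (R × R) M] (L : F) (v : R × R) :
    L v = v.1 • L (1, 0) + v.2 • L (0, 1) := by
  conv_lhs => rw [show v = v.1 • ((1 : R), (0 : R)) + v.2 • ((0 : R), (1 : R)) by simp]
  rw [map_add, map_smul, map_smul]

lemma abs_rpow_neg_two_mul (x α : ℝ) : |x| ^ (-(2 * α)) = ((|x| ^ α) ^ 2)⁻¹ := by
  rw [rpow_neg (abs_nonneg x), mul_comm, rpow_mul (abs_nonneg x), rpow_two]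

lemma conformal_sq_identity {a b : ℝ} (ha : a ≠ 0) (hb : b ≠ 0) (A B v₁ v₂ : ℝ) :
    (v₁ * A + v₂ * B) ^ 2 + (b ^ 2)⁻¹ * (v₁ * (-(a * b) * B) + v₂ * (b * A / a)) ^ 2 =
      (A ^ 2 + (a * B) ^ 2) * (v₁ ^ 2 + (a ^ 2)⁻¹ * v₂ ^ 2) := by
  field_simp
  ring

lemma grushinLengthElement_map_of_grushinCR {α x y : ℝ} (hx : x ≠ 0) (hy : y ≠ 0)
    (L₁ L₂ : ℝ × ℝ →L[ℝ] ℝ)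
    (hCR1 : L₂ (1, 0) = -(|x * y| ^ α) * L₁ (0, 1))
    (hCR2 : |x| ^ α * L₂ (0, 1) = |y| ^ α * L₁ (1, 0)) (v : ℝ × ℝ) :
    grushinLengthElement α y (L₁ v, L₂ v) =
      √(L₁ (1, 0) ^ 2 + (|x| ^ α * L₁ (0, 1)) ^ 2) * grushinLengthElement α x v := by
  have ha : |x| ^ α ≠ 0 := (rpow_pos_of_pos (abs_pos.mpr hx) α).ne'
  have hb : |y| ^ α ≠ 0 := (rpow_pos_of_pos (abs_pos.mpr hy) α).ne'
  have hL₂ : L₂ (0, 1) = |y| ^ α * L₁ (1, 0) / |x| ^ α := by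
    rw [eq_div_iff ha, mul_comm, hCR2]
  rw [abs_mul, mul_rpow (abs_nonneg x) (abs_nonneg y)] at hCR1
  simp only [grushinLengthElement, abs_rpow_neg_two_mul]
  rw [← sqrt_mul (by positivity), map_eq_fst_smul_add_snd_smul L₁ v,
    map_eq_fst_smul_add_snd_smul L₂ v, hCR1, hL₂, smul_eq_mul, smul_eq_mul, smul_eq_mul,
    smul_eq_mul, conformal_sq_identity ha hb]

theorem grushin_length_element_transform_general (α : ℝ)
    (V : Set (ℝ × ℝ)) (hV : IsOpen V) (g : ℝ × ℝ → ℝ × ℝ)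
    (hg : ContDiffOn ℝ 1 g V)
    (hVx : ∀ q ∈ V, q.1 ≠ 0) (hVg1 : ∀ q ∈ V, (g q).1 ≠ 0)
    (hCR1 : ∀ q ∈ V, fderiv ℝ (fun w => (g w).2) q (1, 0) =
      -(|q.1 * (g q).1| ^ α) * fderiv ℝ (fun w => (g w).1) q (0, 1))
    (hCR2 : ∀ q ∈ V, |q.1| ^ α * fderiv ℝ (fun w => (g w).2) q (0, 1) =
      |(g q).1| ^ α * fderiv ℝ (fun w => (g w).1) q (1, 0))
    (γ : ℝ → ℝ × ℝ) (t : ℝ) (v : ℝ × ℝ) (hγ : HasDerivAt γ v t) (hγt : γ t ∈ V) :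
    Real.sqrt ((deriv (fun s => (g (γ s)).1) t) ^ 2 +
        |(g (γ t)).1| ^ (-(2 * α)) * (deriv (fun s => (g (γ s)).2) t) ^ 2) =
      Real.sqrt ((fderiv ℝ (fun w => (g w).1) (γ t) (1, 0)) ^ 2 +
          (|(γ t).1| ^ α * fderiv ℝ (fun w => (g w).1) (γ t) (0, 1)) ^ 2) *
        Real.sqrt (v.1 ^ 2 + |(γ t).1| ^ (-(2 * α)) * v.2 ^ 2) := by
  have hdg : DifferentiableAt ℝ g (γ t) :=
    (hg.contDiffAt (hV.mem_nhds hγt)).differentiableAt one_ne_zero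
  have hderiv₁ : deriv (fun s => (g (γ s)).1) t = fderiv ℝ (fun w => (g w).1) (γ t) v :=
    (hdg.fst.hasFDerivAt.comp_hasDerivAt t hγ).deriv
  have hderiv₂ : deriv (fun s => (g (γ s)).2) t = fderiv ℝ (fun w => (g w).2) (γ t) v :=
    (hdg.snd.hasFDerivAt.comp_hasDerivAt t hγ).deriv
  rw [hderiv₁, hderiv₂]
  exact grushinLengthElement_map_of_grushinCR (hVx _ hγt) (hVg1 _ hγt) _ _
    (hCR1 _ hγt) (hCR2 _ hγt) v

/-- Grushin-conformal maps distort the Grushin length element by the conformal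
factor `|∇_H g₁|`: at a point `t` where the curve `γ` is differentiable, `γ₁(t) ≠ 0`,
`g` is `C¹` near `γ(t)` with `x ≠ 0`, `g₁ ≠ 0` there, and the Grushin Cauchy–Riemann
equations hold, one has
`√((d/dt g₁∘γ)² + |g₁∘γ|^{-2α}(d/dt g₂∘γ)²) = |∇_H g₁(γ t)| √((γ₁')² + |γ₁|^{-2α}(γ₂')²)`. -/
theorem grushin_length_element_transform (α : ℝ) (hα : 0 < α)
    (V : Set (ℝ × ℝ)) (hV : IsOpen V) (g : ℝ × ℝ → ℝ × ℝ)
    (hg : ContDiffOn ℝ 1 g V)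
    (hVx : ∀ q ∈ V, q.1 ≠ 0) (hVg1 : ∀ q ∈ V, (g q).1 ≠ 0)
    (hCR1 : ∀ q ∈ V, fderiv ℝ (fun w => (g w).2) q (1, 0) =
      -(|q.1 * (g q).1| ^ α) * fderiv ℝ (fun w => (g w).1) q (0, 1))
    (hCR2 : ∀ q ∈ V, |q.1| ^ α * fderiv ℝ (fun w => (g w).2) q (0, 1) =
      |(g q).1| ^ α * fderiv ℝ (fun w => (g w).1) q (1, 0))
    (γ : ℝ → ℝ × ℝ) (t : ℝ) (v : ℝ × ℝ) (hγ : HasDerivAt γ v t) (hγt : γ t ∈ V) :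
    Real.sqrt ((deriv (fun s => (g (γ s)).1) t) ^ 2 +
        |(g (γ t)).1| ^ (-(2 * α)) * (deriv (fun s => (g (γ s)).2) t) ^ 2) =
      Real.sqrt ((fderiv ℝ (fun w => (g w).1) (γ t) (1, 0)) ^ 2 +
          (|(γ t).1| ^ α * fderiv ℝ (fun w => (g w).1) (γ t) (0, 1)) ^ 2) *
        Real.sqrt (v.1 ^ 2 + |(γ t).1| ^ (-(2 * α)) * v.2 ^ 2) :=
  grushin_length_element_transform_general α V hV g hg hVx hVg1 hCR1 hCR2 γ t v hγ hγt
end
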